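/- For n ≥ 3 a natural number and a > 0 real, with h(x) = (x^{(n−1)/2} + x^{−(n−1)/2})/(x^{(n+1)/2} + x^{−(n+1)/2}) and g(y) = h(y + √(y² − 1)) − 1 + (y − 1)(n − 1 + 1/cosh a), the right derivative of g at y = 1 equals 1/cosh a − 1, which is negative. -/

import Mathlib

noncomputable def hfun (n : ℕ) (x : ℝ) : ℝ :=
  (x ^ (((n : ℝ) - 1) / 2) + x ^ (-(((n : ℝ) - 1) / 2))) /
    (x ^ (((n : ℝ) + 1) / 2) + x ^ (-(((n : ℝ) + 1) / 2)))

noncomputable def gfun (n : ℕ) (a y : ℝ) : ℝ :=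
  hfun n (y + Real.sqrt (y ^ 2 - 1)) - 1 + (y - 1) * ((n : ℝ) - 1 + 1 / Real.cosh a)

/-!
Substitute `y = cosh L`, so that `y + √(y ^ 2 - 1) = exp L` and
`h (exp L) = cosh ((n-1)L/2) / cosh ((n+1)L/2)`. Then
`h (exp L) - 1 = -2 sinh (nL/2) sinh (L/2) / cosh ((n+1)L/2)` and `y - 1 = 2 sinh² (L/2)`, so the
difference quotient of the `h`-part at `y = 1` is
`-(sinh (nL/2) / sinh (L/2)) / cosh ((n+1)L/2) → -n` (l'Hôpital), and the right derivative of `g`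
is `-n + (n - 1 + 1 / cosh a) = 1 / cosh a - 1`.
-/

open Real Filter Set Topology

lemma Real.exp_rpow_add_exp_rpow_neg (L r : ℝ) : exp L ^ r + exp L ^ (-r) = 2 * cosh (r * L) := by
  rw [← exp_mul, ← exp_mul, cosh_eq]
  ring_nf

lemma Real.cosh_add_sub_cosh_sub (x y : ℝ) :
    cosh (x + y) - cosh (x - y) = 2 * sinh x * sinh y := by
  rw [cosh_add, cosh_sub]
  ring

lemma Real.cosh_sub_one (x : ℝ) : cosh x - 1 = 2 * sinh (x / 2) ^ 2 := by
  conv_lhs => rw [← mul_div_cancel₀ x two_ne_zero, cosh_two_mul, cosh_sq']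
  ring

lemma Real.tendsto_sinh_mul_div_sinh_mul {c d : ℝ} (hd : d ≠ 0) :
    Tendsto (fun x => sinh (c * x) / sinh (d * x)) (𝓝[≠] 0) (𝓝 (c / d)) := by
  have hasDeriv (k x : ℝ) : HasDerivAt (fun x => sinh (k * x)) (cosh (k * x) * k) x := by
    simpa using ((hasDerivAt_id x).const_mul k).sinh
  have hcont : Continuous fun x => cosh (c * x) * c / (cosh (d * x) * d) := by
    have := fun x => (cosh_pos (d * x)).ne'
    fun_prop (disch := simp [*])
  refine HasDerivAt.lhopital_zero_nhds (.of_forall (hasDeriv c)) (.of_forall (hasDeriv d))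
    (.of_forall fun x => mul_ne_zero (cosh_pos _).ne' hd) ?_ ?_ ?_
  · simpa using (hasDeriv c 0).continuousAt.tendsto
  · simpa using (hasDeriv d 0).continuousAt.tendsto
  · simpa using hcont.tendsto 0

lemma hfun_exp (n : ℕ) (L : ℝ) :
    hfun n (exp L) = cosh (((n : ℝ) - 1) / 2 * L) / cosh (((n : ℝ) + 1) / 2 * L) := by
  rw [hfun, exp_rpow_add_exp_rpow_neg, exp_rpow_add_exp_rpow_neg, mul_div_mul_left _ _ two_ne_zero]

lemma hfun_exp_sub_one (n : ℕ) (L : ℝ) :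
    hfun n (exp L) - 1 =
      -(2 * sinh ((n : ℝ) / 2 * L) * sinh (L / 2)) / cosh (((n : ℝ) + 1) / 2 * L) := by
  have hpos := (cosh_pos (((n : ℝ) + 1) / 2 * L)).ne'
  rw [hfun_exp, ← cosh_add_sub_cosh_sub, div_sub_one hpos]
  ring_nf

lemma tendsto_hfun_exp_sub_one_div (n : ℕ) :
    Tendsto (fun L => (hfun n (exp L) - 1) / (cosh L - 1)) (𝓝[≠] 0) (𝓝 (-n)) := by
  have hcosh : Tendsto (fun L => cosh (((n : ℝ) + 1) / 2 * L)) (𝓝[≠] 0) (𝓝 1) := by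
    have : Continuous fun L => cosh (((n : ℝ) + 1) / 2 * L) := by fun_prop
    simpa using (this.tendsto 0).mono_left nhdsWithin_le_nhds
  have hlim := ((tendsto_sinh_mul_div_sinh_mul (c := (n : ℝ) / 2) (d := 1 / 2)
    (by norm_num)).div hcosh one_ne_zero).neg
  rw [show -((n : ℝ) / 2 / (1 / 2) / 1) = -n by ring] at hlim
  refine hlim.congr' ?_
  filter_upwards [self_mem_nhdsWithin] with L (hL : L ≠ 0)
  have hs : sinh (L / 2) ≠ 0 := by simpa using hL
  simp only [Pi.div_apply, hfun_exp_sub_one, cosh_sub_one, one_div_mul_eq_div]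
  field_simp

lemma tendsto_arcosh_nhdsGT_one : Tendsto arcosh (𝓝[>] 1) (𝓝[≠] 0) := by
  refine tendsto_nhdsWithin_of_tendsto_nhds_of_eventually_within _ ?_ ?_
  · simpa [arcosh_zero] using
      (continuousOn_arcosh.continuousWithinAt self_mem_Ici).tendsto.mono_left
        (nhdsWithin_mono _ Ioi_subset_Ici_self)
  · filter_upwards [self_mem_nhdsWithin] with y (hy : 1 < y)
    exact (arcosh_pos hy).ne'

lemma slope_gfun_one (n : ℕ) (a : ℝ) {y : ℝ} (hy : 1 < y) :
    slope (gfun n a) 1 y =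
      (hfun n (exp (arcosh y)) - 1) / (cosh (arcosh y) - 1) + ((n : ℝ) - 1 + 1 / cosh a) := by
  have hy1 : y - 1 ≠ 0 := sub_ne_zero.mpr hy.ne'
  have hg1 : gfun n a 1 = 0 := by norm_num [gfun, hfun]
  rw [slope_def_field, cosh_arcosh hy.le, hg1, sub_zero, gfun, add_div,
    mul_div_cancel_left₀ _ hy1, exp_arcosh hy.le]

theorem stmt_11_general (n : ℕ) (a : ℝ) (ha : 0 < a) :
    HasDerivWithinAt (gfun n a) (1 / Real.cosh a - 1) (Set.Ici (1 : ℝ)) 1 ∧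
      1 / Real.cosh a - 1 < 0 := by
  constructor
  · rw [hasDerivWithinAt_iff_tendsto_slope, Ici_sdiff_left]
    have hlim := ((tendsto_hfun_exp_sub_one_div n).comp tendsto_arcosh_nhdsGT_one).add_const
      ((n : ℝ) - 1 + 1 / cosh a)
    rw [show -(n : ℝ) + ((n : ℝ) - 1 + 1 / cosh a) = 1 / cosh a - 1 by ring] at hlim
    refine hlim.congr' ?_
    filter_upwards [self_mem_nhdsWithin] with y (hy : 1 < y)
    exact (slope_gfun_one n a hy).symm
  · rw [sub_neg, div_lt_one (cosh_pos a)]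
    exact one_lt_cosh.mpr ha.ne'

theorem stmt_11 (n : ℕ) (hn : 3 ≤ n) (a : ℝ) (ha : 0 < a) :
    HasDerivWithinAt (gfun n a) (1 / Real.cosh a - 1) (Set.Ici (1 : ℝ)) 1 ∧
      1 / Real.cosh a - 1 < 0 :=
  stmt_11_general n a ha
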